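/- Assume in addition σ² ≠ 2D. Then h(r₁²) = h(r₂²) = 1, h is strictly decreasing on the interval (0, |σ² − 2D|], and h is strictly increasing on the interval [|σ² − 2D|, ∞). -/
import Mathlib


noncomputable section

/-- `h(z) = (z + σ² - 2D)²/(4 z (σ² - D))`. -/
def hFn (σ2 D z : ℝ) : ℝ := (z + σ2 - 2 * D) ^ 2 / (4 * z * (σ2 - D))

/-- Assume `0 < D < σ²` and `σ² ≠ 2D`. Then `h(r₁²) = h(r₂²) = 1` (where
`r₁ = √(σ²-D) - √D`, `r₂ = √(σ²-D) + √D`), `h` is strictly decreasing on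
`(0, |σ² - 2D|]` and strictly increasing on `[|σ² - 2D|, ∞)`. -/
theorem hFn_monotonicity (σ2 D : ℝ) (hD : 0 < D) (hDσ : D < σ2) (hne : σ2 ≠ 2 * D) :
    hFn σ2 D ((Real.sqrt (σ2 - D) - Real.sqrt D) ^ 2) = 1 ∧
    hFn σ2 D ((Real.sqrt (σ2 - D) + Real.sqrt D) ^ 2) = 1 ∧
    StrictAntiOn (hFn σ2 D) (Set.Ioc 0 |σ2 - 2 * D|) ∧
    StrictMonoOn (hFn σ2 D) (Set.Ici |σ2 - 2 * D|) := by
  have ha : (0:ℝ) < σ2 - D := sub_pos.2 hDσ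
  set s := Real.sqrt (σ2 - D) with hs
  set t := Real.sqrt D with ht
  have hs2 : s ^ 2 = σ2 - D := Real.sq_sqrt ha.le
  have ht2 : t ^ 2 = D := Real.sq_sqrt hD.le
  have hspos : 0 < s := Real.sqrt_pos.2 ha
  have htpos : 0 < t := Real.sqrt_pos.2 hD
  have hst : s ≠ t := by
    intro h
    apply hne
    have : s ^ 2 = t ^ 2 := by rw [h]
    rw [hs2, ht2] at this
    linarith
  have hcne : σ2 - 2 * D ≠ 0 := sub_ne_zero.2 hne
  have hcpos : 0 < |σ2 - 2 * D| := abs_pos.2 hcne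
  have key : ∀ x y : ℝ, 0 < x → 0 < y →
      hFn σ2 D y - hFn σ2 D x
        = (y - x) * (x * y - (σ2 - 2 * D) ^ 2) / (4 * (σ2 - D) * x * y) := by
    intro x y hx hy
    unfold hFn
    field_simp
    ring
  have hsq : |σ2 - 2 * D| ^ 2 = (σ2 - 2 * D) ^ 2 := sq_abs _
  refine ⟨?_, ?_, ?_, ?_⟩
  · have hz : (s - t) ^ 2 ≠ 0 := pow_ne_zero _ (sub_ne_zero.2 hst)
    have hσ : σ2 = s ^ 2 + t ^ 2 := by rw [hs2, ht2]; ring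
    unfold hFn
    rw [div_eq_one_iff_eq (by positivity)]
    rw [hσ]; ring_nf
    rw [ht2]; ring
  · have hz : (s + t) ^ 2 ≠ 0 := pow_ne_zero _ (by positivity)
    have hσ : σ2 = s ^ 2 + t ^ 2 := by rw [hs2, ht2]; ring
    unfold hFn
    rw [div_eq_one_iff_eq (by positivity)]
    rw [hσ]; ring_nf
    rw [ht2]; ring
  · intro x hx y hy hxy
    obtain ⟨hx0, hxle⟩ := hx
    obtain ⟨hy0, hyle⟩ := hy
    have hlt : x * y - (σ2 - 2 * D) ^ 2 < 0 := by
      have h1 : x * y ≤ x * |σ2 - 2 * D| := by nlinarith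
      have h2 : x * |σ2 - 2 * D| < |σ2 - 2 * D| * |σ2 - 2 * D| := by nlinarith
      nlinarith [sq_abs (σ2 - 2 * D)]
    have := key x y hx0 hy0
    have hden : 0 < 4 * (σ2 - D) * x * y := by positivity
    have : hFn σ2 D y - hFn σ2 D x < 0 := by
      rw [this]
      apply div_neg_of_neg_of_pos _ hden
      nlinarith
    linarith
  · intro x hx y hy hxy
    simp only [Set.mem_Ici] at hx hy
    have hx0 : 0 < x := lt_of_lt_of_le hcpos hx
    have hy0 : 0 < y := lt_of_lt_of_le hcpos hy
    have hgt : 0 < x * y - (σ2 - 2 * D) ^ 2 := by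
      nlinarith [sq_abs (σ2 - 2 * D)]
    have := key x y hx0 hy0
    have hden : 0 < 4 * (σ2 - D) * x * y := by positivity
    have : 0 < hFn σ2 D y - hFn σ2 D x := by
      rw [this]
      apply div_pos _ hden
      nlinarith
    linarith
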